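/- Let 0 < ε < 0.01, let L : ℝ^{n-2} → ℝ^{n-2} be a linear isomorphism, and let q : ℝ^{n-2} → ℝ be a positive definite quadratic form. For t ∈ ℝ^{n-2} define f_t : ℝ^n → ℝ^3 on coordinates (r₁, w, r₂) (with r₁, r₂ ∈ ℝ, w ∈ ℝ^{n-2}) by f_t(r₁, w, r₂) = (r₁, w · L(t), r₂ q(t)). Then for any X, X' ∈ ℝ^n with ‖X − X'‖ = 1, the Lebesgue measure of the set {t ∈ ℝ^{n-2} : 1 ≤ ‖t‖ ≤ 2 and ‖f_t(X) − f_t(X')‖ ≤ ε} is at most D·ε, where D is a constant depending only on L and q. -/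

import Mathlib

open MeasureTheory Metric
open scoped ENNReal
open scoped RealInnerProductSpace

noncomputable section

/-- `ℝ^m` with the Euclidean norm. -/
abbrev E (m : ℕ) := EuclideanSpace ℝ (Fin m)

/-- `ℝ^n` written in coordinates `(r₁, w, r₂)` with `r₁, r₂ ∈ ℝ`, `w ∈ ℝ^{n-2}`,
equipped with the Euclidean (ℓ²) norm. -/
abbrev V (m : ℕ) := WithLp 2 (ℝ × WithLp 2 (E m × ℝ))

/-- The coordinate `r₁`. -/
def r1 {m : ℕ} (X : V m) : ℝ := (WithLp.equiv 2 _ X).1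

/-- The coordinate `w ∈ ℝ^{n-2}`. -/
def wc {m : ℕ} (X : V m) : E m := (WithLp.equiv 2 _ (WithLp.equiv 2 _ X).2).1

/-- The coordinate `r₂`. -/
def r2 {m : ℕ} (X : V m) : ℝ := (WithLp.equiv 2 _ (WithLp.equiv 2 _ X).2).2

/-- The map `f_t(r₁, w, r₂) = (r₁, w · L(t), r₂ q(t)) ∈ ℝ³`. -/
def fproj {m : ℕ} (L : E m ≃ₗ[ℝ] E m) (q : QuadraticForm ℝ (E m)) (t : E m) (X : V m) :
    EuclideanSpace ℝ (Fin 3) :=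
  (WithLp.equiv 2 _).symm ![r1 X, (inner ℝ (wc X) (L t) : ℝ), r2 X * q t]

lemma coord_abs_le_norm {ι : Type*} [Fintype ι] (x : EuclideanSpace ℝ ι) (i : ι) :
    |x i| ≤ ‖x‖ := by
  rw [EuclideanSpace.norm_eq, ← Real.sqrt_sq_eq_abs]
  apply Real.sqrt_le_sqrt
  have : (x i) ^ 2 = ‖x i‖ ^ 2 := by rw [Real.norm_eq_abs, sq_abs]
  rw [this]
  exact Finset.single_le_sum (f := fun j => ‖x j‖ ^ 2) (fun j _ => sq_nonneg _) (Finset.mem_univ i)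

lemma box_volume {m : ℕ} (C : Fin m → ℝ) :
    volume {x : EuclideanSpace ℝ (Fin m) | ∀ i, |x i| ≤ C i} =
      ∏ i, ENNReal.ofReal (2 * C i) := by
  have hset : {x : EuclideanSpace ℝ (Fin m) | ∀ i, |x i| ≤ C i} =
      (MeasurableEquiv.toLp 2 (Fin m → ℝ)).symm ⁻¹'
        (Set.pi Set.univ fun i => Set.Icc (-(C i)) (C i)) := by
    ext x
    simp only [Set.mem_setOf_eq, Set.mem_preimage, Set.mem_pi, Set.mem_univ, true_implies,
      Set.mem_Icc, ← abs_le]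
    rfl
  rw [hset, (EuclideanSpace.volume_preserving_symm_measurableEquiv_toLp (Fin m)).measure_preimage
    (MeasurableSet.univ_pi fun i => measurableSet_Icc).nullMeasurableSet, volume_pi_pi]
  congr 1
  funext i
  rw [Real.volume_Icc]
  congr 1
  ring

set_option maxHeartbeats 1000000 in
lemma slab_bound {m : ℕ} (hm : 0 < m) (u : E m) (hu : u ≠ 0) (ε : ℝ) (hε : 0 ≤ ε) :
    volume {t : E m | ‖t‖ ≤ 2 ∧ |⟪u, t⟫| ≤ ε} ≤
      ENNReal.ofReal (2 * ε / ‖u‖ * 4 ^ m) := by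
  have hun : 0 < ‖u‖ := norm_pos_iff.mpr hu
  set i₀ : Fin m := ⟨0, hm⟩
  set e : E m := ‖u‖⁻¹ • u with he_def
  have he : ‖e‖ = 1 := by
    rw [he_def, norm_smul, norm_inv, norm_norm, inv_mul_cancel₀ hun.ne']
  have horth : Orthonormal ℝ (({i₀} : Set (Fin m)).restrict (fun _ => e)) := by
    constructor
    · intro i; exact he
    · intro i j hij; exact absurd (Subsingleton.elim i j) hij
  obtain ⟨b, hb⟩ := horth.exists_orthonormalBasis_extension_of_card_eq
    (by simp [finrank_euclideanSpace_fin])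
  have hbi₀ : b i₀ = e := hb i₀ rfl
  set f : EuclideanSpace ℝ (Fin m) ≃ₗᵢ[ℝ] E m := b.repr.symm with hf
  have hSclosed : IsClosed {t : E m | ‖t‖ ≤ 2 ∧ |⟪u, t⟫| ≤ ε} := by
    apply IsClosed.inter
    · exact isClosed_le continuous_norm continuous_const
    · exact isClosed_le ((innerSL ℝ u).continuous.abs) continuous_const
  have hmp : MeasurePreserving f := f.measurePreserving
  rw [← hmp.measure_preimage hSclosed.measurableSet.nullMeasurableSet]
  set C : Fin m → ℝ := fun i => if i = i₀ then ε / ‖u‖ else 2 with hC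
  have hsub : f ⁻¹' {t : E m | ‖t‖ ≤ 2 ∧ |⟪u, t⟫| ≤ ε} ⊆
      {x : EuclideanSpace ℝ (Fin m) | ∀ i, |x i| ≤ C i} := by
    intro x hx
    obtain ⟨hx1, hx2⟩ := hx
    have hfx : ‖f x‖ = ‖x‖ := f.norm_map x
    have hinner : ⟪u, f x⟫ = ‖u‖ * x i₀ := by
      have hu_eq : u = ‖u‖ • e := by
        rw [he_def, smul_smul, mul_inv_cancel₀ hun.ne', one_smul]
      have h1 : f (EuclideanSpace.single i₀ (1:ℝ)) = e := by
        rw [hf, b.repr_symm_single]; exact hbi₀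
      calc ⟪u, f x⟫ = ⟪‖u‖ • e, f x⟫ := by rw [← hu_eq]
        _ = ‖u‖ * ⟪e, f x⟫ := by rw [real_inner_smul_left]
        _ = ‖u‖ * ⟪f (EuclideanSpace.single i₀ (1:ℝ)), f x⟫ := by rw [h1]
        _ = ‖u‖ * ⟪EuclideanSpace.single i₀ (1:ℝ), x⟫ := by rw [f.inner_map_map]
        _ = ‖u‖ * x i₀ := by rw [EuclideanSpace.inner_single_left]; simp
    intro i
    by_cases hi : i = i₀
    · rw [hi]
      have h2 : C i₀ = ε / ‖u‖ := by rw [hC]; simp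
      rw [h2, le_div_iff₀ hun, mul_comm]
      rw [← abs_of_pos hun, ← abs_mul, ← hinner]
      exact hx2
    · have h2 : C i = 2 := by rw [hC]; simp [hi]
      rw [h2]
      calc |x i| ≤ ‖x‖ := coord_abs_le_norm x i
        _ = ‖f x‖ := hfx.symm
        _ ≤ 2 := hx1
  refine le_trans (measure_mono hsub) ?_
  rw [box_volume]
  calc ∏ i, ENNReal.ofReal (2 * C i)
      = ENNReal.ofReal (2 * C i₀) *
          ∏ i ∈ Finset.univ.erase i₀, ENNReal.ofReal (2 * C i) :=
        (Finset.mul_prod_erase Finset.univ _ (Finset.mem_univ i₀)).symm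
    _ ≤ ENNReal.ofReal (2 * ε / ‖u‖) * ENNReal.ofReal 4 ^ m := by
        apply mul_le_mul'
        · apply le_of_eq; congr 1
          rw [hC]; simp [mul_div_assoc]
        · calc ∏ i ∈ Finset.univ.erase i₀, ENNReal.ofReal (2 * C i)
              ≤ ∏ _i ∈ Finset.univ.erase i₀, ENNReal.ofReal 4 := by
                apply Finset.prod_le_prod'
                intro i hi
                have h2 : C i = 2 := by rw [hC]; simp [Finset.ne_of_mem_erase hi]
                rw [h2]; norm_num
            _ = ENNReal.ofReal 4 ^ (Finset.univ.erase i₀).card := Finset.prod_const _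
            _ ≤ ENNReal.ofReal 4 ^ m := by
                apply pow_le_pow_right' (by norm_num)
                calc (Finset.univ.erase i₀).card ≤ Finset.univ.card :=
                      Finset.card_le_card (Finset.erase_subset _ _)
                  _ = m := by simp
    _ = ENNReal.ofReal (2 * ε / ‖u‖ * 4 ^ m) := by
        rw [← ENNReal.ofReal_pow (by norm_num), ← ENNReal.ofReal_mul (by positivity)]

set_option maxHeartbeats 1000000 in
lemma q_continuous {m : ℕ} (q : QuadraticForm ℝ (E m)) : Continuous q := by
  have key : ∀ B : LinearMap.BilinMap ℝ (E m) ℝ, Continuous fun x => B x x := by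
    intro B
    let B' : E m →ₗ[ℝ] (E m →L[ℝ] ℝ) :=
      { toFun := fun x => LinearMap.toContinuousLinearMap (B x)
        map_add' := by intro x y; ext z; simp
        map_smul' := by intro c x; ext z; simp }
    let Bc : E m →L[ℝ] (E m →L[ℝ] ℝ) := LinearMap.toContinuousLinearMap B'
    have key : Continuous fun x => Bc x x :=
      Bc.continuous₂.comp (continuous_id.prodMk continuous_id)
    exact key
  have h2 : ⇑q = fun x => (QuadraticMap.associatedHom ℝ q) x x := by
    funext x; rw [QuadraticMap.associated_eq_self_apply]
  rw [h2]; exact key _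

lemma norm_sq_decomp {m : ℕ} (Z : V m) :
    ‖Z‖ ^ 2 = (r1 Z) ^ 2 + ‖wc Z‖ ^ 2 + (r2 Z) ^ 2 := by
  rw [WithLp.prod_norm_sq_eq_of_L2, WithLp.prod_norm_sq_eq_of_L2]
  simp only [Real.norm_eq_abs, sq_abs]
  ring_nf
  rfl

lemma r1_sub {m : ℕ} (X Y : V m) : r1 (X - Y) = r1 X - r1 Y := rfl
lemma wc_sub {m : ℕ} (X Y : V m) : wc (X - Y) = wc X - wc Y := rfl
lemma r2_sub {m : ℕ} (X Y : V m) : r2 (X - Y) = r2 X - r2 Y := rfl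

lemma fproj_sub {m : ℕ} (L : E m ≃ₗ[ℝ] E m) (q : QuadraticForm ℝ (E m)) (t : E m)
    (X X' : V m) :
    fproj L q t X - fproj L q t X' = (WithLp.equiv 2 _).symm
      ![r1 X - r1 X', (inner ℝ (wc X - wc X') (L t) : ℝ), (r2 X - r2 X') * q t] := by
  unfold fproj
  ext i
  rw [PiLp.sub_apply]
  fin_cases i <;>
    simp [WithLp.equiv_symm_apply, PiLp.toLp_apply, inner_sub_left, sub_mul]

set_option maxHeartbeats 1000000 in
theorem stmt0 (n : ℕ) (hn : 3 ≤ n)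
    (L : E (n - 2) ≃ₗ[ℝ] E (n - 2))
    (q : QuadraticForm ℝ (E (n - 2))) (hq : q.PosDef) :
    ∃ D : ℝ, 0 < D ∧
      ∀ ε : ℝ, 0 < ε → ε < 0.01 →
        ∀ X X' : V (n - 2), ‖X - X'‖ = 1 →
          volume {t : E (n - 2) | 1 ≤ ‖t‖ ∧ ‖t‖ ≤ 2 ∧ ‖fproj L q t X - fproj L q t X'‖ ≤ ε}
            ≤ ENNReal.ofReal (D * ε) := by
  have hm : 0 < n - 2 := by omega
  -- minimum of q on the annulus
  have hA_compact : IsCompact {t : E (n - 2) | 1 ≤ ‖t‖ ∧ ‖t‖ ≤ 2} := by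
    have hclosed : IsClosed {t : E (n - 2) | 1 ≤ ‖t‖ ∧ ‖t‖ ≤ 2} :=
      (isClosed_le continuous_const continuous_norm).inter
        (isClosed_le continuous_norm continuous_const)
    apply Metric.isCompact_of_isClosed_isBounded hclosed
    apply (Metric.isBounded_closedBall (x := (0 : E (n - 2))) (r := 2)).subset
    intro t ht
    rw [Metric.mem_closedBall, dist_zero_right]
    exact ht.2
  have hAne : ({t : E (n - 2) | 1 ≤ ‖t‖ ∧ ‖t‖ ≤ 2} : Set (E (n - 2))).Nonempty := by
    refine ⟨EuclideanSpace.single ⟨0, hm⟩ (1 : ℝ), ?_⟩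
    constructor <;> rw [EuclideanSpace.norm_single] <;> norm_num
  obtain ⟨t₀, ht₀A, ht₀min⟩ := hA_compact.exists_isMinOn hAne (q_continuous q).continuousOn
  set c : ℝ := q t₀ with hc_def
  have hc : 0 < c := by
    refine hq t₀ fun h0 => ?_
    obtain ⟨h1', _⟩ := ht₀A
    rw [h0, norm_zero] at h1'
    linarith
  have hqlow : ∀ t : E (n - 2), 1 ≤ ‖t‖ → ‖t‖ ≤ 2 → c ≤ q t := by
    intro t h1 h2
    exact ht₀min ⟨h1, h2⟩
  -- adjoint machinery
  set Lc : E (n - 2) →L[ℝ] E (n - 2) := LinearMap.toContinuousLinearMap L.toLinearMap with hLc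
  set Mc : E (n - 2) →L[ℝ] E (n - 2) :=
    ContinuousLinearMap.adjoint (LinearMap.toContinuousLinearMap L.symm.toLinearMap) with hMc
  set K : ℝ := ‖Mc‖ + 1 with hK_def
  have hK : 0 < K := by positivity
  have hMcLc : ∀ v : E (n - 2), Mc (ContinuousLinearMap.adjoint Lc v) = v := by
    intro v
    have hcomp : LinearMap.toContinuousLinearMap L.toLinearMap ∘L
        LinearMap.toContinuousLinearMap L.symm.toLinearMap = ContinuousLinearMap.id ℝ (E (n - 2)) := by
      ext x
      simp
    have := ContinuousLinearMap.adjoint_comp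
      (LinearMap.toContinuousLinearMap L.toLinearMap)
      (LinearMap.toContinuousLinearMap L.symm.toLinearMap)
    rw [hcomp, ContinuousLinearMap.adjoint_id] at this
    calc Mc (ContinuousLinearMap.adjoint Lc v)
        = (Mc ∘L ContinuousLinearMap.adjoint Lc) v := rfl
      _ = ContinuousLinearMap.id ℝ (E (n - 2)) v := by rw [hMc, hLc, ← this]
      _ = v := rfl
  have hKrec : ∀ v : E (n - 2), ‖v‖ ≤ K * ‖ContinuousLinearMap.adjoint Lc v‖ := by
    intro v
    calc ‖v‖ = ‖Mc (ContinuousLinearMap.adjoint Lc v)‖ := by rw [hMcLc]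
      _ ≤ ‖Mc‖ * ‖ContinuousLinearMap.adjoint Lc v‖ := Mc.le_opNorm _
      _ ≤ K * ‖ContinuousLinearMap.adjoint Lc v‖ := by
          apply mul_le_mul_of_nonneg_right _ (norm_nonneg _)
          rw [hK_def]; linarith
  -- total volume of ball
  set V₀ : ℝ := (volume (closedBall (0 : E (n - 2)) 2)).toReal with hV₀_def
  have hV₀ : volume (closedBall (0 : E (n - 2)) 2) = ENNReal.ofReal V₀ :=
    (ENNReal.ofReal_toReal (measure_closedBall_lt_top).ne).symm
  have hV₀nn : 0 ≤ V₀ := ENNReal.toReal_nonneg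
  set C₁ : ℝ := 4 * K * 4 ^ (n - 2) with hC₁_def
  set C₂ : ℝ := 2 * V₀ / c with hC₂_def
  have hC₁ : 0 < C₁ := by positivity
  have hC₂ : 0 ≤ C₂ := by positivity
  refine ⟨C₁ + C₂ + 1, by positivity, ?_⟩
  intro ε hε hε' X X' hXX'
  set S := {t : E (n - 2) | 1 ≤ ‖t‖ ∧ ‖t‖ ≤ 2 ∧ ‖fproj L q t X - fproj L q t X'‖ ≤ ε} with hS_def
  rcases le_or_gt ε (c / 2) with hsmall | hbig
  · -- small ε: slab estimate
    rcases Set.eq_empty_or_nonempty S with hSe | ⟨t₁, ht₁⟩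
    · rw [hSe]; simp
    · -- extract coordinate bounds
      have hcoordb : ∀ t : E (n - 2), ‖fproj L q t X - fproj L q t X'‖ ≤ ε →
          |r1 X - r1 X'| ≤ ε ∧ |(inner ℝ (wc X - wc X') (L t) : ℝ)| ≤ ε ∧
            |(r2 X - r2 X') * q t| ≤ ε := by
        intro t ht
        refine ⟨?_, ?_, ?_⟩
        · have := (coord_abs_le_norm (fproj L q t X - fproj L q t X') 0).trans ht
          rwa [fproj_sub, WithLp.equiv_symm_apply, PiLp.toLp_apply] at this
        · have := (coord_abs_le_norm (fproj L q t X - fproj L q t X') 1).trans ht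
          rwa [fproj_sub, WithLp.equiv_symm_apply, PiLp.toLp_apply] at this
        · have := (coord_abs_le_norm (fproj L q t X - fproj L q t X') 2).trans ht
          rwa [fproj_sub, WithLp.equiv_symm_apply, PiLp.toLp_apply] at this
      obtain ⟨ht₁1, ht₁2, ht₁3⟩ := ht₁
      obtain ⟨ha, hv1, hb⟩ := hcoordb t₁ ht₁3
      set a : ℝ := r1 X - r1 X'
      set v : E (n - 2) := wc X - wc X' with hv_def
      set b : ℝ := r2 X - r2 X'
      -- |b| ≤ 1/2
      have hqt₁ : c ≤ q t₁ := hqlow t₁ ht₁1 ht₁2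
      have hb2 : |b| ≤ 1 / 2 := by
        have h1 : |b| * c ≤ |b| * q t₁ := by
          apply mul_le_mul_of_nonneg_left hqt₁ (abs_nonneg b)
        have h2 : |b| * q t₁ ≤ ε := by
          rw [← abs_of_nonneg (le_trans hc.le hqt₁), ← abs_mul]; exact hb
        nlinarith
      have ha2 : |a| ≤ 1 / 100 := by
        have : (0.01 : ℝ) = 1 / 100 := by norm_num
        linarith [ha, hε'.le]
      -- norm of v
      have hnorm : a ^ 2 + ‖v‖ ^ 2 + b ^ 2 = 1 := by
        have := norm_sq_decomp (X - X')
        rw [hXX'] at this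
        have h1 : r1 (X - X') = a := rfl
        have h2 : wc (X - X') = v := rfl
        have h3 : r2 (X - X') = b := rfl
        rw [h1, h2, h3] at this
        linarith [this]
      have hvn : 1 / 2 ≤ ‖v‖ := by
        nlinarith [norm_nonneg v, sq_abs a, sq_abs b, abs_nonneg a, abs_nonneg b]
      have hvne : v ≠ 0 := by
        intro h0
        rw [h0, norm_zero] at hvn
        linarith
      set u : E (n - 2) := ContinuousLinearMap.adjoint Lc v with hu_def
      have hun : 1 / (2 * K) ≤ ‖u‖ := by
        have := hKrec v
        rw [← hu_def] at this
        rw [div_le_iff₀ (by positivity)]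
        nlinarith
      have hune : u ≠ 0 := by
        intro h0
        rw [h0, norm_zero] at hun
        have : (0:ℝ) < 1 / (2 * K) := by positivity
        linarith
      have hsub : S ⊆ {t : E (n - 2) | ‖t‖ ≤ 2 ∧ |⟪u, t⟫| ≤ ε} := by
        intro t ht
        obtain ⟨h1, h2, h3⟩ := ht
        refine ⟨h2, ?_⟩
        have hinner : ⟪u, t⟫ = (inner ℝ v (L t) : ℝ) := by
          rw [hu_def, ContinuousLinearMap.adjoint_inner_left]
          rfl
        rw [hinner]
        exact (hcoordb t h3).2.1
      calc volume S ≤ volume {t : E (n - 2) | ‖t‖ ≤ 2 ∧ |⟪u, t⟫| ≤ ε} := measure_mono hsub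
        _ ≤ ENNReal.ofReal (2 * ε / ‖u‖ * 4 ^ (n - 2)) := slab_bound hm u hune ε hε.le
        _ ≤ ENNReal.ofReal ((C₁ + C₂ + 1) * ε) := by
            apply ENNReal.ofReal_le_ofReal
            have hun' : 0 < ‖u‖ := norm_pos_iff.mpr hune
            have h1 : 2 * ε / ‖u‖ ≤ 2 * ε * (2 * K) := by
              rw [div_le_iff₀ hun']
              have h2 : 1 ≤ ‖u‖ * (2 * K) := by
                rw [div_le_iff₀ (by positivity : (0:ℝ) < 2 * K)] at hun
                linarith
              nlinarith
            have h3 : (0:ℝ) ≤ 4 ^ (n - 2) := by positivity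
            calc 2 * ε / ‖u‖ * 4 ^ (n - 2) ≤ 2 * ε * (2 * K) * 4 ^ (n - 2) := by
                  apply mul_le_mul_of_nonneg_right h1 h3
              _ = C₁ * ε := by rw [hC₁_def]; ring
              _ ≤ (C₁ + C₂ + 1) * ε := by nlinarith
  · -- large ε: trivial bound by the volume of the ball
    have hsub : S ⊆ closedBall (0 : E (n - 2)) 2 := by
      intro t ht
      rw [Metric.mem_closedBall, dist_zero_right]
      exact ht.2.1
    calc volume S ≤ volume (closedBall (0 : E (n - 2)) 2) := measure_mono hsub
      _ = ENNReal.ofReal V₀ := hV₀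
      _ ≤ ENNReal.ofReal ((C₁ + C₂ + 1) * ε) := by
          apply ENNReal.ofReal_le_ofReal
          have h1 : C₂ * ε ≥ V₀ := by
            rw [hC₂_def]
            rw [ge_iff_le, div_mul_eq_mul_div, le_div_iff₀ hc]
            nlinarith
          nlinarith
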